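/- arXiv:1401.5368 — 4 statements merged into one kernel-verified Lean document; each statement's English description precedes it below -/
import Mathlib

section
/- (Jacobi triple product in theta form) For 0 < |q| < 1 and w ≠ 0, (q; q)_∞ · θ(w; q) = ∑_{k=-∞}^∞ (-1)^k q^{k(k-1)/2} w^k. -/
/-!
Cauchy's proof. The Gaussian binomial coefficients `[n, m]_q` satisfy the q-binomial theorem
`∏_{j<n} (1 + z q^j) = ∑_m q^(m(m-1)/2) [n, m]_q z^m`. Taking `n = 2N` and replacing `z` by
`z q^(-N)` turns it into the truncated triple product
`∏_{j<N} (1 + q^j z) (1 + q^(j+1) / z) = ∑_{|k| ≤ N} q^(k(k-1)/2) [2N, N+k]_q z^k`.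
As `N → ∞`, `[2N, N+k]_q = (q;q)_{2N} / ((q;q)_{N+k} (q;q)_{N-k}) → 1 / (q;q)_∞`; since the
partial products `(q;q)_n` converge to a nonzero limit, these coefficients are bounded uniformly in
`N` and `k`, so Tannery's theorem passes to the limit. The theorem is the case `z = -w`.
-/

noncomputable def theta (q w : ℂ) : ℂ := ∏' j : ℕ, (1 - q ^ j * w) * (1 - q ^ (j + 1) * w⁻¹)

open Finset Filter Topology

section QBinomial

variable {R : Type*} [CommSemiring R] (q : R)

-- The q-Pascal rule as a definition: no division, so it makes sense over any semiring.
def qBinomial : ℕ → ℕ → R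
  | _, 0 => 1
  | 0, _ + 1 => 0
  | n + 1, m + 1 => q ^ (m + 1) * qBinomial n (m + 1) + qBinomial n m

@[simp]
theorem qBinomial_zero_right (n : ℕ) : qBinomial q n 0 = 1 := by
  cases n <;> rfl

theorem qBinomial_succ_succ (n m : ℕ) :
    qBinomial q (n + 1) (m + 1) = q ^ (m + 1) * qBinomial q n (m + 1) + qBinomial q n m := rfl

theorem qBinomial_eq_zero_of_lt {n m : ℕ} (h : n < m) : qBinomial q n m = 0 := by
  induction n generalizing m with
  | zero => obtain ⟨m, rfl⟩ := Nat.exists_eq_add_one_of_ne_zero h.ne'; rfl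
  | succ n ih =>
    obtain ⟨m, rfl⟩ := Nat.exists_eq_add_one_of_ne_zero (by omega : m ≠ 0)
    rw [qBinomial_succ_succ, ih (by omega), ih (by omega), mul_zero, zero_add]

@[simp]
theorem qBinomial_self (n : ℕ) : qBinomial q n n = 1 := by
  induction n with
  | zero => rfl
  | succ n ih => rw [qBinomial_succ_succ, qBinomial_eq_zero_of_lt q n.lt_succ_self, ih]; simp

theorem prod_range_one_add_mul_pow (z : R) (n : ℕ) :
    ∏ j ∈ range n, (1 + z * q ^ j)
      = ∑ m ∈ range (n + 1), q ^ m.choose 2 * qBinomial q n m * z ^ m := by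
  induction n generalizing z with
  | zero => simp
  | succ n ih =>
    have hsplit : ∀ m ∈ range (n + 1),
        q ^ (m + 1).choose 2 * qBinomial q (n + 1) (m + 1) * z ^ (m + 1)
          = q ^ (m + 1).choose 2 * qBinomial q n (m + 1) * (z * q) ^ (m + 1)
            + z * (q ^ m.choose 2 * qBinomial q n m * (z * q) ^ m) := by
      intro m _
      rw [qBinomial_succ_succ, Nat.choose_succ_succ', Nat.choose_one_right]
      ring
    have hdrop :
        (∑ m ∈ range (n + 1), q ^ (m + 1).choose 2 * qBinomial q n (m + 1) * (z * q) ^ (m + 1))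
            + 1 = ∑ m ∈ range (n + 1), q ^ m.choose 2 * qBinomial q n m * (z * q) ^ m := by
      rw [sum_range_succ, qBinomial_eq_zero_of_lt q n.lt_succ_self, sum_range_succ' _ n]
      simp
    have hshift :
        ∏ j ∈ range n, (1 + z * q ^ (j + 1)) = ∏ j ∈ range n, (1 + z * q * q ^ j) := by
      simp only [pow_succ', mul_assoc]
    rw [sum_range_succ', sum_congr rfl hsplit, sum_add_distrib, ← mul_sum, prod_range_succ',
      hshift, ih, ← hdrop]
    simp only [pow_zero, mul_one, Nat.choose_zero_succ, qBinomial_zero_right]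
    ring

end QBinomial

section CommRing

variable {R : Type*} [CommRing R] (q : R)

def qFactorial (n : ℕ) : R := ∏ i ∈ range n, (1 - q ^ (i + 1))

theorem qFactorial_succ (n : ℕ) : qFactorial q (n + 1) = qFactorial q n * (1 - q ^ (n + 1)) :=
  prod_range_succ _ n

@[simp]
theorem qFactorial_zero : qFactorial q 0 = 1 := prod_range_zero _

theorem qBinomial_add_mul_qFactorial (a b : ℕ) :
    qBinomial q (a + b) a * qFactorial q a * qFactorial q b = qFactorial q (a + b) := by
  induction h : a + b generalizing a b with
  | zero =>
    obtain ⟨rfl, rfl⟩ : a = 0 ∧ b = 0 := by omega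
    simp
  | succ n ih =>
    rcases a with _ | a
    · simp [← h]
    rcases b with _ | b
    · simp [← h]
    obtain rfl : n = a + b + 1 := by omega
    have h1 := ih (a + 1) b (by omega)
    have h2 := ih a (b + 1) (by omega)
    rw [qBinomial_succ_succ]
    linear_combination q ^ (a + 1) * (1 - q ^ (b + 1)) * h1 + (1 - q ^ (a + 1)) * h2
      + q ^ (a + 1) * qBinomial q (a + b + 1) (a + 1) * qFactorial q (a + 1) * qFactorial_succ q b
      + qBinomial q (a + b + 1) a * qFactorial q (b + 1) * qFactorial_succ q a
      - qFactorial_succ q (a + b + 1)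

end CommRing

theorem Int.add_mul_add_sub_one_ediv_two (a b : ℤ) :
    (a + b) * (a + b - 1) / 2 = a * (a - 1) / 2 + b * (b - 1) / 2 + a * b := by
  rw [show (a + b) * (a + b - 1) = a * (a - 1) + b * (b - 1) + a * b * 2 by ring,
    Int.add_mul_ediv_right _ _ two_ne_zero,
    Int.add_ediv_of_dvd_right (Int.even_mul_pred_self b).two_dvd]

theorem Int.natCast_choose_two (n : ℕ) : (n.choose 2 : ℤ) = n * (n - 1) / 2 := by
  induction n with
  | zero => rfl
  | succ n ih =>
    push_cast [Nat.choose_succ_succ', Nat.choose_one_right, ih, Int.add_mul_add_sub_one_ediv_two]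
    ring

theorem Int.neg_mul_neg_sub_one_ediv_two (k : ℤ) : -k * (-k - 1) / 2 = k * (k - 1) / 2 + k := by
  rw [show -k * (-k - 1) = k * (k - 1) + k * 2 by ring, Int.add_mul_ediv_right _ _ two_ne_zero]

section Field

variable {K : Type*} [Field K] {q z : K}

theorem qBinomial_add_eq_div (hq : ∀ n, qFactorial q n ≠ 0) (a b : ℕ) :
    qBinomial q (a + b) a = qFactorial q (a + b) / (qFactorial q a * qFactorial q b) := by
  rw [eq_div_iff (mul_ne_zero (hq a) (hq b)), ← mul_assoc, qBinomial_add_mul_qFactorial]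

theorem prod_range_one_add_mul_inv_pow (hq : q ≠ 0) (hz : z ≠ 0) (N : ℕ) :
    ∏ j ∈ range N, (1 + z * (q ^ (j + 1))⁻¹)
      = z ^ N * (q ^ (N + 1).choose 2)⁻¹ * ∏ j ∈ range N, (1 + q ^ (j + 1) * z⁻¹) := by
  induction N with
  | zero => simp
  | succ N ih =>
    rw [prod_range_succ, ih, prod_range_succ, Nat.choose_succ_succ' (N + 1), Nat.choose_one_right]
    field_simp
    ring

theorem prod_range_two_mul_one_add_mul_pow (hq : q ≠ 0) (hz : z ≠ 0) (N : ℕ) :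
    ∏ j ∈ range (2 * N), (1 + z * (q ^ N)⁻¹ * q ^ j) = z ^ N * (q ^ (N + 1).choose 2)⁻¹
      * ∏ j ∈ range N, ((1 + q ^ j * z) * (1 + q ^ (j + 1) * z⁻¹)) := by
  set u := z * (q ^ N)⁻¹
  have hu : u * q ^ N = z := inv_mul_cancel_right₀ (pow_ne_zero N hq) z
  have hlower :
      ∏ j ∈ range N, (1 + u * q ^ j) = ∏ j ∈ range N, (1 + z * (q ^ (j + 1))⁻¹) := by
    rw [← prod_range_reflect]
    refine prod_congr rfl fun j hj => ?_
    have hjN : N - 1 - j + (j + 1) = N := by have := mem_range.1 hj; omega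
    have hsplit : q ^ N = q ^ (N - 1 - j) * q ^ (j + 1) := by rw [← pow_add, hjN]
    rw [← hu, hsplit, ← mul_assoc, mul_inv_cancel_right₀ (pow_ne_zero _ hq)]
  have hupper : ∏ j ∈ range N, (1 + u * q ^ (N + j)) = ∏ j ∈ range N, (1 + q ^ j * z) := by
    refine prod_congr rfl fun j _ => ?_
    rw [pow_add, ← mul_assoc, hu, mul_comm]
  rw [two_mul, prod_range_add, hlower, hupper, prod_range_one_add_mul_inv_pow hq hz,
    prod_mul_distrib]
  ring

theorem prod_range_one_add_mul_one_add_inv_eq_sum (hq : q ≠ 0) (hz : z ≠ 0) (N : ℕ) :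
    ∏ j ∈ range N, ((1 + q ^ j * z) * (1 + q ^ (j + 1) * z⁻¹))
      = ∑ k ∈ Icc (-(N : ℤ)) N,
          q ^ (k * (k - 1) / 2) * qBinomial q (2 * N) (k + N).toNat * z ^ k := by
  set u := z * (q ^ N)⁻¹
  have hterm : ∀ m ∈ range (2 * N + 1),
      (z ^ N)⁻¹ * q ^ (N + 1).choose 2 * (q ^ m.choose 2 * qBinomial q (2 * N) m * u ^ m)
        = q ^ (((m : ℤ) - N) * ((m : ℤ) - N - 1) / 2)
          * qBinomial q (2 * N) ((m : ℤ) - N + N).toNat * z ^ ((m : ℤ) - N) := by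
    intro m _
    have hexp : ((m : ℤ) - N) * ((m : ℤ) - N - 1) / 2
        = ((m.choose 2 + (N + 1).choose 2 : ℕ) : ℤ) - ((N * m : ℕ) : ℤ) := by
      rw [sub_eq_add_neg, Int.add_mul_add_sub_one_ediv_two, Int.neg_mul_neg_sub_one_ediv_two]
      push_cast [Nat.choose_succ_succ', Nat.choose_one_right, Int.natCast_choose_two]
      ring
    rw [hexp, zpow_sub₀ hq, zpow_sub₀ hz, sub_add_cancel, Int.toNat_natCast]
    simp only [zpow_natCast, u, mul_pow, inv_pow, ← pow_mul, pow_add]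
    field_simp
  calc ∏ j ∈ range N, ((1 + q ^ j * z) * (1 + q ^ (j + 1) * z⁻¹))
      = (z ^ N)⁻¹ * q ^ (N + 1).choose 2 * ∏ j ∈ range (2 * N), (1 + u * q ^ j) := by
        have hcancel :
            (z ^ N)⁻¹ * q ^ (N + 1).choose 2 * (z ^ N * (q ^ (N + 1).choose 2)⁻¹) = 1 := by
          field_simp
        rw [prod_range_two_mul_one_add_mul_pow hq hz, ← mul_assoc, hcancel, one_mul]
    _ = ∑ m ∈ range (2 * N + 1),
          (z ^ N)⁻¹ * q ^ (N + 1).choose 2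
            * (q ^ m.choose 2 * qBinomial q (2 * N) m * u ^ m) := by
        rw [prod_range_one_add_mul_pow, mul_sum]
    _ = _ := by
        refine sum_nbij' (fun m => (m : ℤ) - N) (fun k => (k + N).toNat) ?_ ?_ ?_ ?_ hterm <;>
          intro a ha <;> simp only [mem_range, mem_Icc] at ha ⊢ <;> omega

end Field

section Analytic

variable {𝕜 : Type*} [NormedField 𝕜] {q : 𝕜}

theorem one_sub_pow_succ_ne_zero (hq : ‖q‖ < 1) (j : ℕ) : 1 - q ^ (j + 1) ≠ 0 := by
  refine sub_ne_zero.2 (ne_of_apply_ne norm ?_)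
  rw [norm_one, norm_pow]
  exact (pow_lt_one₀ (norm_nonneg q) hq j.succ_ne_zero).ne'

theorem qFactorial_ne_zero (hq : ‖q‖ < 1) (n : ℕ) : qFactorial q n ≠ 0 :=
  prod_ne_zero_iff.2 fun j _ => one_sub_pow_succ_ne_zero hq j

theorem summable_norm_neg_pow_succ (hq : ‖q‖ < 1) :
    Summable fun j : ℕ => ‖-q ^ (j + 1)‖ := by
  simpa only [norm_neg, norm_mul, norm_pow, pow_succ] using
    (summable_geometric_of_lt_one (norm_nonneg q) hq).mul_right ‖q‖

theorem multipliable_one_sub_pow_succ [CompleteSpace 𝕜] (hq : ‖q‖ < 1) :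
    Multipliable fun j : ℕ => 1 - q ^ (j + 1) := by
  simpa only [← sub_eq_add_neg] using
    multipliable_one_add_of_summable (f := fun j : ℕ => -q ^ (j + 1))
      (summable_norm_neg_pow_succ hq)

theorem tprod_one_sub_pow_succ_ne_zero [CompleteSpace 𝕜] (hq : ‖q‖ < 1) :
    ∏' j : ℕ, (1 - q ^ (j + 1)) ≠ 0 := by
  have hne (j : ℕ) : 1 + -q ^ (j + 1) ≠ 0 := by
    simpa only [← sub_eq_add_neg] using one_sub_pow_succ_ne_zero hq j
  simpa only [← sub_eq_add_neg] using
    tprod_one_add_ne_zero_of_summable hne (summable_norm_neg_pow_succ hq)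

theorem tendsto_qFactorial [CompleteSpace 𝕜] (hq : ‖q‖ < 1) :
    Tendsto (qFactorial q) atTop (𝓝 (∏' j : ℕ, (1 - q ^ (j + 1)))) :=
  (multipliable_one_sub_pow_succ hq).hasProd.tendsto_prod_nat

theorem exists_norm_qBinomial_le [CompleteSpace 𝕜] (hq : ‖q‖ < 1) :
    ∃ B, ∀ n m, ‖qBinomial q n m‖ ≤ B := by
  have hF := tendsto_qFactorial hq
  obtain ⟨C, hC⟩ := (Metric.isBounded_range_of_tendsto _ hF).exists_norm_le
  obtain ⟨D, hD⟩ := (Metric.isBounded_range_of_tendsto _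
    (hF.inv₀ (tprod_one_sub_pow_succ_ne_zero hq))).exists_norm_le
  have hC0 : 0 ≤ C := (norm_nonneg _).trans (hC _ ⟨0, rfl⟩)
  have hD0 : 0 ≤ D := (norm_nonneg _).trans (hD _ ⟨0, rfl⟩)
  refine ⟨C * D * D, fun n m => ?_⟩
  rcases le_or_gt m n with hmn | hmn
  · obtain ⟨b, rfl⟩ := Nat.exists_eq_add_of_le hmn
    rw [qBinomial_add_eq_div (qFactorial_ne_zero hq), div_eq_mul_inv, mul_inv, ← mul_assoc,
      norm_mul, norm_mul]
    gcongr
    exacts [hC _ ⟨_, rfl⟩, hD _ ⟨_, rfl⟩, hD _ ⟨_, rfl⟩]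
  · rw [qBinomial_eq_zero_of_lt q hmn, norm_zero]
    positivity

theorem tendsto_qBinomial_add [CompleteSpace 𝕜] (hq : ‖q‖ < 1) {α : Type*} {l : Filter α}
    {a b : α → ℕ} (ha : Tendsto a l atTop) (hb : Tendsto b l atTop) :
    Tendsto (fun x => qBinomial q (a x + b x) (a x)) l
      (𝓝 (∏' j : ℕ, (1 - q ^ (j + 1)))⁻¹) := by
  have hF := tendsto_qFactorial hq
  have hP := tprod_one_sub_pow_succ_ne_zero hq
  simp only [qBinomial_add_eq_div (qFactorial_ne_zero hq)]
  have hlim := (hF.comp (ha.atTop_add_atTop hb)).div ((hF.comp ha).mul (hF.comp hb))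
    (mul_ne_zero hP hP)
  rwa [div_mul_cancel_left₀ hP] at hlim

theorem tendsto_qBinomial_two_mul [CompleteSpace 𝕜] (hq : ‖q‖ < 1) (k : ℤ) :
    Tendsto (fun N : ℕ => qBinomial q (2 * N) (k + N).toNat) atTop
      (𝓝 (∏' j : ℕ, (1 - q ^ (j + 1)))⁻¹) := by
  have ha : Tendsto (fun N : ℕ => (k + N).toNat) atTop atTop :=
    tendsto_atTop_atTop.2 fun b => ⟨b + k.natAbs, fun N hN => by omega⟩
  have hb : Tendsto (fun N : ℕ => (N - k).toNat) atTop atTop :=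
    tendsto_atTop_atTop.2 fun b => ⟨b + k.natAbs, fun N hN => by omega⟩
  refine (tendsto_qBinomial_add hq ha hb).congr' ?_
  filter_upwards [eventually_ge_atTop k.natAbs] with N hN
  rw [show (k + N).toNat + (N - k).toNat = 2 * N by omega]

theorem summable_norm_pow_choose_two_mul_pow (hq : ‖q‖ < 1) (a : 𝕜) :
    Summable fun n : ℕ => ‖q ^ n.choose 2 * a ^ n‖ := by
  refine summable_of_ratio_norm_eventually_le (r := 1 / 2) (by norm_num) ?_
  have hsmall : ∀ᶠ n in atTop, ‖q ^ n * a‖ ≤ 1 / 2 := by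
    have h := ((tendsto_pow_atTop_nhds_zero_of_norm_lt_one hq).mul_const a).norm
    rw [zero_mul, norm_zero] at h
    exact h.eventually (ge_mem_nhds (by norm_num))
  filter_upwards [hsmall] with n hn
  have hstep : q ^ (n + 1).choose 2 * a ^ (n + 1) = q ^ n.choose 2 * a ^ n * (q ^ n * a) := by
    rw [Nat.choose_succ_succ', Nat.choose_one_right]
    ring
  rw [norm_norm, norm_norm, hstep, norm_mul, mul_comm]
  gcongr

theorem summable_norm_zpow_mul_zpow (hq : ‖q‖ < 1) (z : 𝕜) :
    Summable fun k : ℤ => ‖q ^ (k * (k - 1) / 2) * z ^ k‖ := by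
  refine Summable.of_nat_of_neg ?_ ?_
  · simpa only [← Int.natCast_choose_two, zpow_natCast] using
      summable_norm_pow_choose_two_mul_pow hq z
  · have hneg (n : ℕ) : q ^ (-(n : ℤ) * (-n - 1) / 2) * z ^ (-(n : ℤ))
        = q ^ n.choose 2 * (q * z⁻¹) ^ n := by
      rw [Int.neg_mul_neg_sub_one_ediv_two, ← Int.natCast_choose_two, ← Nat.cast_add,
        zpow_natCast, zpow_neg, zpow_natCast, pow_add, mul_pow, inv_pow, mul_assoc]
    simpa only [hneg] using summable_norm_pow_choose_two_mul_pow hq (q * z⁻¹)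

theorem multipliable_one_add_mul_one_add_inv [CompleteSpace 𝕜] (hq : ‖q‖ < 1) (z : 𝕜) :
    Multipliable fun j : ℕ => (1 + q ^ j * z) * (1 + q ^ (j + 1) * z⁻¹) := by
  have hgeom (c : 𝕜) : Summable fun j : ℕ => ‖q ^ j * c‖ := by
    simpa only [norm_mul, norm_pow] using
      (summable_geometric_of_lt_one (norm_nonneg q) hq).mul_right ‖c‖
  refine (multipliable_one_add_of_summable (f := fun j : ℕ => q ^ j * z) (hgeom z)).mul ?_
  refine multipliable_one_add_of_summable (f := fun j : ℕ => q ^ (j + 1) * z⁻¹) ?_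
  simpa only [pow_succ, mul_assoc] using hgeom (q * z⁻¹)

theorem tendsto_prod_range_one_add_mul_one_add_inv [CompleteSpace 𝕜] (hq0 : q ≠ 0)
    (hq : ‖q‖ < 1) {z : 𝕜} (hz : z ≠ 0) :
    Tendsto (fun N => ∏ j ∈ range N, ((1 + q ^ j * z) * (1 + q ^ (j + 1) * z⁻¹))) atTop
      (𝓝 ((∏' j : ℕ, (1 - q ^ (j + 1)))⁻¹
        * ∑' k : ℤ, q ^ (k * (k - 1) / 2) * z ^ k)) := by
  set P := ∏' j : ℕ, (1 - q ^ (j + 1))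
  obtain ⟨B, hB⟩ := exists_norm_qBinomial_le hq
  have hB0 : 0 ≤ B := (norm_nonneg _).trans (hB 0 0)
  -- The `if` matters: for `k < -N`, `(k + N).toNat = 0` and `qBinomial q (2 * N) 0 = 1`.
  let f (N : ℕ) (k : ℤ) : 𝕜 := if k ∈ Icc (-(N : ℤ)) N
    then q ^ (k * (k - 1) / 2) * qBinomial q (2 * N) (k + N).toNat * z ^ k else 0
  have hf_sum (N : ℕ) :
      ∑' k, f N k = ∏ j ∈ range N, ((1 + q ^ j * z) * (1 + q ^ (j + 1) * z⁻¹)) := by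
    rw [tsum_eq_sum (s := Icc (-(N : ℤ)) N) (fun k hk => if_neg hk),
      prod_range_one_add_mul_one_add_inv_eq_sum hq0 hz]
    exact sum_congr rfl fun k hk => if_pos hk
  have hf_lim (k : ℤ) :
      Tendsto (f · k) atTop (𝓝 (P⁻¹ * (q ^ (k * (k - 1) / 2) * z ^ k))) := by
    have h := ((tendsto_qBinomial_two_mul hq k).const_mul (q ^ (k * (k - 1) / 2))).mul_const
      (z ^ k)
    rw [mul_right_comm, mul_comm _ P⁻¹] at h
    refine h.congr' ?_
    filter_upwards [eventually_ge_atTop k.natAbs] with N hN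
    exact (if_pos (mem_Icc.2 ⟨by omega, by omega⟩)).symm
  have hf_bound (N : ℕ) (k : ℤ) : ‖f N k‖ ≤ B * ‖q ^ (k * (k - 1) / 2) * z ^ k‖ := by
    by_cases hk : k ∈ Icc (-(N : ℤ)) N
    · rw [show f N k = _ from if_pos hk, mul_right_comm, norm_mul, mul_comm B]
      gcongr
      exact hB _ _
    · rw [show f N k = 0 from if_neg hk, norm_zero]
      positivity
  rw [← tsum_mul_left]
  simpa only [hf_sum] using tendsto_tsum_of_dominated_convergence
    ((summable_norm_zpow_mul_zpow hq z).mul_left B) hf_lim (Eventually.of_forall hf_bound)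

theorem jacobi_triple_product [CompleteSpace 𝕜] (hq0 : q ≠ 0) (hq : ‖q‖ < 1) {z : 𝕜}
    (hz : z ≠ 0) :
    (∏' j : ℕ, (1 - q ^ (j + 1))) * ∏' j : ℕ, ((1 + q ^ j * z) * (1 + q ^ (j + 1) * z⁻¹))
      = ∑' k : ℤ, q ^ (k * (k - 1) / 2) * z ^ k := by
  rw [tendsto_nhds_unique (multipliable_one_add_mul_one_add_inv hq z).hasProd.tendsto_prod_nat
    (tendsto_prod_range_one_add_mul_one_add_inv hq0 hq hz),
    mul_inv_cancel_left₀ (tprod_one_sub_pow_succ_ne_zero hq)]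

end Analytic

theorem jacobi_triple_product_theta (q w : ℂ) (hq0 : 0 < ‖q‖)
    (hq1 : ‖q‖ < 1) (hw : w ≠ 0) :
    (∏' j : ℕ, (1 - q ^ (j + 1))) * theta q w
      = ∑' k : ℤ, (-1 : ℂ) ^ k * q ^ (k * (k - 1) / 2) * w ^ k := by
  have htheta : theta q w = ∏' j : ℕ, ((1 + q ^ j * -w) * (1 + q ^ (j + 1) * (-w)⁻¹)) := by
    simp only [theta, inv_neg, mul_neg, ← sub_eq_add_neg]
  rw [htheta, jacobi_triple_product (norm_pos_iff.1 hq0) hq1 (neg_ne_zero.2 hw)]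
  refine tsum_congr fun k => ?_
  rw [neg_eq_neg_one_mul, mul_zpow]
  ring
end

section
/- (Addition-formula form) For 0 < |q| < 1 and nonzero complex x, y with θ(x; q) ≠ 0 and θ(y; q) ≠ 0 and θ(-1; q) ≠ 0: y·θ(xy; q)θ(x/y; q)/(θ(x; q)²θ(y; q)²) = f(y) - f(x), where f(x) := θ(-x; q)²/(θ(-1; q)²·θ(x; q)²). -/
noncomputable def fTheta (q x : ℂ) : ℂ := theta q (-x) ^ 2 / (theta q (-1) ^ 2 * theta q x ^ 2)

/-!
Clearing denominators, the formula says that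
`K x = θ(-y)² θ(x)² - θ(-x)² θ(y)² - θ(-1)² y θ(xy) θ(x/y)` vanishes on `ℂˣ`.
From `θ(qw) = -w⁻¹ θ(w)` one gets `K(qx) = x⁻² K(x)`, while `g x = θ(x) θ(-x)` satisfies
`g(qx) = -x⁻² g(x)`. The zeros of `g` are simple and `K` vanishes there (it suffices to check
`x = ±1`, by the functional equations), so `F = K / g` is holomorphic on `ℂˣ` with
`F(qx) = -F(x)`. Hence `F` is bounded by its maximum on the annulus `‖q‖ ≤ ‖x‖ ≤ 1`, extends
across `0`, and is constant by Liouville's theorem; `F(q) = -F(1)` forces `F = 0`.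
-/

open Filter Topology Set

theorem forall_ne_zero_of_forall_annulus {q : ℂ} (hq0 : q ≠ 0) (hq1 : ‖q‖ < 1) {P : ℂ → Prop}
    (hP : ∀ z, z ≠ 0 → (P (q * z) ↔ P z)) (hann : ∀ w : ℂ, ‖q‖ < ‖w‖ → ‖w‖ ≤ 1 → P w)
    {z : ℂ} (hz : z ≠ 0) : P z := by
  have hzpow : ∀ n : ℤ, P (q ^ n * z) ↔ P z := by
    intro n
    induction n using Int.induction_on with
    | zero => simp
    | succ n ih =>
      rw [zpow_add_one₀ hq0, mul_comm _ q, mul_assoc, hP _ (by simp [hq0, hz]), ih]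
    | pred n ih =>
      rw [← ih, sub_eq_add_neg, zpow_add₀ hq0, zpow_neg_one, ← hP _ (by simp [hq0, hz])]
      field_simp
  have hq : 0 < ‖q‖ := norm_pos_iff.2 hq0
  obtain ⟨n, hn1, hn2⟩ := exists_mem_Ioc_zpow (norm_pos_iff.2 hz) ((one_lt_inv₀ hq).2 hq1)
  have hscale : ∀ m : ℤ, ‖q‖ ^ (n + 1) * ‖q‖⁻¹ ^ m = ‖q‖ ^ (n + 1 - m) := fun m => by
    rw [inv_zpow', ← zpow_add₀ hq.ne', sub_eq_add_neg]
  have hpos : 0 < ‖q‖ ^ (n + 1) := zpow_pos hq _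
  refine (hzpow (n + 1)).1 (hann _ ?_ ?_) <;> rw [norm_mul, norm_zpow]
  · calc ‖q‖ = ‖q‖ ^ (n + 1) * ‖q‖⁻¹ ^ n := by rw [hscale]; simp
      _ < ‖q‖ ^ (n + 1) * ‖z‖ := by gcongr
  · calc ‖q‖ ^ (n + 1) * ‖z‖ ≤ ‖q‖ ^ (n + 1) * ‖q‖⁻¹ ^ (n + 1) := by gcongr
      _ = 1 := by rw [hscale, sub_self, zpow_zero]

theorem mul_deriv_comp_mul_of_eq_zero {f u : ℂ → ℂ} {q z : ℂ} (hf : DifferentiableAt ℂ f z)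
    (hfq : DifferentiableAt ℂ f (q * z)) (hu : DifferentiableAt ℂ u z)
    (hfu : ∀ᶠ w in 𝓝 z, f (q * w) = u w * f w) (hz : f z = 0) :
    q * deriv f (q * z) = u z * deriv f z := by
  have hlhs : HasDerivAt (fun w => f (q * w)) (deriv f (q * z) * q) z :=
    hfq.hasDerivAt.comp z ((hasDerivAt_id z).const_mul q |>.congr_deriv (mul_one q))
  have hrhs : HasDerivAt (fun w => u w * f w) (deriv u z * f z + u z * deriv f z) z :=
    hu.hasDerivAt.mul hf.hasDerivAt
  rw [hz, mul_zero, zero_add] at hrhs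
  rw [mul_comm]
  exact hlhs.unique (hrhs.congr_of_eventuallyEq hfu)

theorem apply_eq_apply_of_differentiableOn_compl_singleton {F : ℂ → ℂ} {c : ℂ}
    (hF : DifferentiableOn ℂ F {c}ᶜ) (hb : BddAbove (norm ∘ F '' {c}ᶜ)) {z w : ℂ}
    (hz : z ≠ c) (hw : w ≠ c) : F z = F w := by
  set G := Function.update F c (limUnder (𝓝[≠] c) F)
  have hG : Differentiable ℂ G := by
    rw [← differentiableOn_univ]
    exact Complex.differentiableOn_update_limUnder_of_bddAbove univ_mem
      (by rwa [← compl_eq_univ_sdiff]) (by rwa [← compl_eq_univ_sdiff])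
  have hGF : EqOn G F {c}ᶜ := fun x hx => Function.update_of_ne hx _ _
  obtain ⟨C, hC⟩ := hb
  have hbdd : Bornology.IsBounded (range G) := by
    refine (Metric.isBounded_closedBall (x := 0) (r := C)).subset ?_
    refine (hG.continuous.range_subset_closure_image_dense (dense_compl_singleton c)).trans ?_
    refine closure_minimal ?_ Metric.isClosed_closedBall
    rintro _ ⟨x, hx, rfl⟩
    rw [mem_closedBall_zero_iff, hGF hx]
    exact hC ⟨x, hx, rfl⟩
  rw [← hGF hz, ← hGF hw]
  exact hG.apply_eq_apply_of_bounded hbdd z w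

theorem eq_zero_of_comp_mul_eq_neg {q : ℂ} (hq0 : q ≠ 0) (hq1 : ‖q‖ < 1) {F : ℂ → ℂ}
    (hF : DifferentiableOn ℂ F {0}ᶜ) (hFq : ∀ z, z ≠ 0 → F (q * z) = -F z) {z : ℂ}
    (hz : z ≠ 0) : F z = 0 := by
  obtain ⟨C, hC⟩ := ((isCompact_closedBall (0 : ℂ) 1).diff
    (Metric.isOpen_ball (x := 0) (ε := ‖q‖))).exists_bound_of_continuousOn (f := F)
    (hF.continuousOn.mono fun w hw (h0 : w = 0) => by simp [h0, hq0] at hw)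
  have hbound : ∀ w, w ≠ 0 → ‖F w‖ ≤ C := fun w hw =>
    forall_ne_zero_of_forall_annulus hq0 hq1 (P := fun w => ‖F w‖ ≤ C)
      (fun w hw => by rw [hFq w hw, norm_neg])
      (fun w h1 h2 => hC w ⟨by simpa using h2, by simpa using h1.le⟩) hw
  have hconst := fun x (hx : x ≠ 0) => apply_eq_apply_of_differentiableOn_compl_singleton hF
    ⟨C, by rintro _ ⟨w, hw, rfl⟩; exact hbound w hw⟩ hx one_ne_zero
  have h1 : F 1 = -F 1 := by rw [← hFq 1 one_ne_zero, mul_one, hconst q hq0]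
  rw [hconst z hz]
  linear_combination h1 / 2

noncomputable def lhopitalDiv (K g : ℂ → ℂ) (z : ℂ) : ℂ :=
  if g z = 0 then deriv K z / deriv g z else K z / g z

theorem mul_lhopitalDiv {K g : ℂ → ℂ} {z : ℂ} (h : g z = 0 → K z = 0) :
    g z * lhopitalDiv K g z = K z := by
  by_cases hz : g z = 0
  · simp [hz, h hz]
  · simp [lhopitalDiv, hz, mul_div_cancel₀]

theorem differentiableAt_lhopitalDiv {K g : ℂ → ℂ} {z : ℂ}
    (hK : ∀ᶠ w in 𝓝 z, DifferentiableAt ℂ K w) (hg : ∀ᶠ w in 𝓝 z, DifferentiableAt ℂ g w)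
    (hz : g z = 0 → K z = 0 ∧ deriv g z ≠ 0) : DifferentiableAt ℂ (lhopitalDiv K g) z := by
  by_cases hgz : g z = 0
  · obtain ⟨hKz, hg'⟩ := hz hgz
    have hs : {w | DifferentiableAt ℂ K w ∧ DifferentiableAt ℂ g w} ∈ 𝓝 z := hK.and hg
    have hdK : DifferentiableAt ℂ (dslope K z) z :=
      ((Complex.differentiableOn_dslope hs).2 fun w hw =>
        hw.1.differentiableWithinAt).differentiableAt hs
    have hdg : DifferentiableAt ℂ (dslope g z) z :=
      ((Complex.differentiableOn_dslope hs).2 fun w hw =>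
        hw.2.differentiableWithinAt).differentiableAt hs
    have hdg0 : dslope g z z ≠ 0 := by rwa [dslope_same]
    refine (hdK.div hdg hdg0).congr_of_eventuallyEq ?_
    filter_upwards [hdg.continuousAt.eventually_ne hdg0] with w hw
    rcases eq_or_ne w z with rfl | hwz
    · simp [lhopitalDiv, hgz, dslope_same]
    · have hsub : w - z ≠ 0 := sub_ne_zero.2 hwz
      have hgw : g w = (w - z) * dslope g z w := by
        simpa [hgz] using (sub_smul_dslope g z w).symm
      have hKw : K w = (w - z) * dslope K z w := by
        simpa [hKz] using (sub_smul_dslope K z w).symm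
      rw [lhopitalDiv, if_neg (by rw [hgw]; exact mul_ne_zero hsub hw), hgw, hKw,
        mul_div_mul_left _ _ hsub, Pi.div_apply]
  · have hev : ∀ᶠ w in 𝓝 z, g w ≠ 0 := hg.self_of_nhds.continuousAt.eventually_ne hgz
    refine (hK.self_of_nhds.div hg.self_of_nhds hgz).congr_of_eventuallyEq ?_
    filter_upwards [hev] with w hw
    simp [lhopitalDiv, hw]

theorem lhopitalDiv_comp_mul {K g u v : ℂ → ℂ} {q z : ℂ} (hq : q ≠ 0)
    (hK : DifferentiableAt ℂ K z) (hKq : DifferentiableAt ℂ K (q * z))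
    (hg : DifferentiableAt ℂ g z) (hgq : DifferentiableAt ℂ g (q * z))
    (hv : DifferentiableAt ℂ v z) (hu : DifferentiableAt ℂ u z) (hu0 : u z ≠ 0)
    (hKv : ∀ᶠ w in 𝓝 z, K (q * w) = v w * K w) (hgu : ∀ᶠ w in 𝓝 z, g (q * w) = u w * g w)
    (hzero : g z = 0 → K z = 0) :
    lhopitalDiv K g (q * z) = v z / u z * lhopitalDiv K g z := by
  by_cases hgz : g z = 0
  · have hgqz : g (q * z) = 0 := by rw [hgu.self_of_nhds, hgz, mul_zero]
    have hK' := mul_deriv_comp_mul_of_eq_zero hK hKq hv hKv (hzero hgz)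
    have hg' := mul_deriv_comp_mul_of_eq_zero hg hgq hu hgu hgz
    rw [lhopitalDiv, lhopitalDiv, if_pos hgqz, if_pos hgz, ← mul_div_mul_left _ _ hq, hK', hg']
    field_simp
  · have hgqz : g (q * z) ≠ 0 := by rw [hgu.self_of_nhds]; exact mul_ne_zero hu0 hgz
    rw [lhopitalDiv, lhopitalDiv, if_neg hgqz, if_neg hgz, hKv.self_of_nhds, hgu.self_of_nhds]
    field_simp

/-- The `q`-Pochhammer symbol `(a; q)_∞`. -/
noncomputable def qPochhammer (a q : ℂ) : ℂ := ∏' n : ℕ, (1 - q ^ n * a)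

section qPochhammer

variable {q : ℂ}

theorem summable_norm_pow_mul (hq : ‖q‖ < 1) (a : ℂ) : Summable fun n : ℕ => ‖q ^ n * a‖ := by
  simpa [norm_mul, norm_pow] using
    (summable_geometric_of_lt_one (norm_nonneg q) hq).mul_right ‖a‖

theorem multipliable_one_sub_pow_mul (hq : ‖q‖ < 1) (a : ℂ) :
    Multipliable fun n : ℕ => 1 - q ^ n * a := by
  simpa [sub_eq_add_neg] using
    Complex.multipliable_one_add_of_summable (summable_norm_pow_mul hq a).of_norm.neg

theorem qPochhammer_eq_one_sub_mul (hq : ‖q‖ < 1) (a : ℂ) :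
    qPochhammer a q = (1 - a) * qPochhammer (q * a) q := by
  rw [qPochhammer, tprod_eq_zero_mul' ((multipliable_one_sub_pow_mul hq (q * a)).congr
    fun n => by ring_nf), pow_zero, one_mul, qPochhammer]
  congr 1
  exact tprod_congr fun n => by ring

theorem qPochhammer_eq_zero_iff (hq : ‖q‖ < 1) {a : ℂ} :
    qPochhammer a q = 0 ↔ ∃ n : ℕ, q ^ n * a = 1 := by
  constructor
  · intro h
    by_contra! hne
    rw [qPochhammer] at h
    refine tprod_one_add_ne_zero_of_summable (f := fun n => -(q ^ n * a))
      (fun n => by rw [← sub_eq_add_neg, sub_ne_zero]; exact (hne n).symm)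
      (by simpa using summable_norm_pow_mul hq a) ?_
    simpa [← sub_eq_add_neg] using h
  · rintro ⟨n, hn⟩
    exact tprod_of_exists_eq_zero ⟨n, by rw [hn, sub_self]⟩

theorem differentiable_qPochhammer (hq : ‖q‖ < 1) : Differentiable ℂ (qPochhammer · q) := by
  intro a
  have hball : DifferentiableOn ℂ (qPochhammer · q) (Metric.ball 0 (‖a‖ + 1)) := by
    have hprod := ((summable_geometric_of_lt_one (norm_nonneg q) hq).mul_right
      (‖a‖ + 1)).hasProdLocallyUniformlyOn_nat_one_add (f := fun n b => -(q ^ n * b))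
      (Metric.isOpen_ball (x := 0) (ε := ‖a‖ + 1)) (.of_forall fun n b hb => ?_)
      fun n => by fun_prop
    · simp only [← sub_eq_add_neg] at hprod
      exact hprod.differentiableOn (.of_forall fun s => by fun_prop) Metric.isOpen_ball
    · rw [norm_neg, norm_mul, norm_pow]
      gcongr
      exact (mem_ball_zero_iff.1 hb).le
  exact hball.differentiableAt (Metric.isOpen_ball.mem_nhds (by simp))

end qPochhammer

section theta

variable {q : ℂ}

theorem theta_eq_qPochhammer_mul (hq : ‖q‖ < 1) (w : ℂ) :
    theta q w = qPochhammer w q * qPochhammer (q * w⁻¹) q := by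
  rw [qPochhammer, qPochhammer, ← (multipliable_one_sub_pow_mul hq w).tprod_mul
    (multipliable_one_sub_pow_mul hq _), theta]
  exact tprod_congr fun n => by ring

theorem theta_eq_one_sub_mul (hq : ‖q‖ < 1) (w : ℂ) :
    theta q w = (1 - w) * (qPochhammer (q * w) q * qPochhammer (q * w⁻¹) q) := by
  rw [theta_eq_qPochhammer_mul hq, qPochhammer_eq_one_sub_mul hq w, mul_assoc]

theorem theta_one (hq : ‖q‖ < 1) : theta q 1 = 0 := by
  rw [theta_eq_one_sub_mul hq, sub_self, zero_mul]

theorem theta_inv (hq : ‖q‖ < 1) {w : ℂ} (hw : w ≠ 0) : theta q w⁻¹ = -w⁻¹ * theta q w := by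
  rw [theta_eq_one_sub_mul hq, theta_eq_one_sub_mul hq, inv_inv]
  field_simp
  ring

theorem theta_mul_left (hq0 : q ≠ 0) (hq1 : ‖q‖ < 1) {w : ℂ} (hw : w ≠ 0) :
    theta q (q * w) = -w⁻¹ * theta q w := by
  rw [← theta_inv hq1 hw, theta, theta]
  refine tprod_congr fun n => ?_
  field_simp
  ring

theorem differentiableAt_theta (hq : ‖q‖ < 1) {w : ℂ} (hw : w ≠ 0) :
    DifferentiableAt ℂ (theta q) w := by
  have hP := differentiable_qPochhammer hq
  have : DifferentiableAt ℂ (fun z => qPochhammer z q * qPochhammer (q * z⁻¹) q) w :=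
    (hP w).mul ((hP _).comp w ((differentiableAt_inv hw).const_mul q))
  exact this.congr_of_eventuallyEq (.of_forall fun z => theta_eq_qPochhammer_mul hq z)

theorem hasDerivAt_theta_one (hq : ‖q‖ < 1) :
    HasDerivAt (theta q) (-qPochhammer q q ^ 2) 1 := by
  have hP := differentiable_qPochhammer hq
  have hrest : DifferentiableAt ℂ (fun z => qPochhammer (q * z) q * qPochhammer (q * z⁻¹) q) 1 :=
    ((hP _).comp 1 (differentiableAt_id.const_mul q)).mul
      ((hP _).comp 1 ((differentiableAt_inv one_ne_zero).const_mul q))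
  have h := ((hasDerivAt_id (1 : ℂ)).const_sub 1).mul hrest.hasDerivAt
  refine (h.congr_of_eventuallyEq (.of_forall fun z => theta_eq_one_sub_mul hq z)).congr_deriv ?_
  simp [sq]

theorem qPochhammer_self_ne_zero (hq : ‖q‖ < 1) : qPochhammer q q ≠ 0 := by
  rw [Ne, qPochhammer_eq_zero_iff hq]
  rintro ⟨n, hn⟩
  have : ‖q‖ ^ (n + 1) = 1 := by rw [← norm_pow, pow_succ, hn, norm_one]
  exact (pow_lt_one₀ (norm_nonneg q) hq n.succ_ne_zero).ne this

theorem eq_one_of_theta_eq_zero (hq : ‖q‖ < 1) {w : ℂ} (hw1 : ‖q‖ < ‖w‖) (hw2 : ‖w‖ ≤ 1)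
    (h : theta q w = 0) : w = 1 := by
  have hw0 : w ≠ 0 := norm_pos_iff.1 ((norm_nonneg q).trans_lt hw1)
  rw [theta_eq_qPochhammer_mul hq, mul_eq_zero, qPochhammer_eq_zero_iff hq,
    qPochhammer_eq_zero_iff hq] at h
  rcases h with ⟨n, hn⟩ | ⟨n, hn⟩
  · rcases n.eq_zero_or_pos with rfl | hpos
    · simpa using hn
    · have : ‖q‖ ^ n * ‖w‖ < 1 :=
        mul_lt_one_of_nonneg_of_lt_one_left (by positivity)
          (pow_lt_one₀ (norm_nonneg q) hq hpos.ne') hw2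
      rw [← norm_pow, ← norm_mul, hn, norm_one] at this
      exact absurd this (lt_irrefl 1)
  · have : ‖w‖ = ‖q‖ ^ (n + 1) := by
      rw [← mul_assoc, ← pow_succ, mul_inv_eq_one₀ hw0] at hn
      rw [← hn, norm_pow]
    rw [this] at hw1
    exact absurd hw1 (not_lt.2 (pow_le_of_le_one (norm_nonneg q) hq.le n.succ_ne_zero))

theorem theta_neg_one_ne_zero (hq : ‖q‖ < 1) : theta q (-1) ≠ 0 := fun h =>
  absurd (eq_one_of_theta_eq_zero hq (by simpa using hq) (by simp) h) (by norm_num)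

end theta

noncomputable def thetaMulNeg (q x : ℂ) : ℂ := theta q x * theta q (-x)

noncomputable def thetaAdditionDefect (q y x : ℂ) : ℂ :=
  theta q (-y) ^ 2 * theta q x ^ 2 - theta q (-x) ^ 2 * theta q y ^ 2
    - theta q (-1) ^ 2 * y * theta q (x * y) * theta q (x / y)

section thetaAdditionDefect

variable {q y : ℂ}

theorem differentiableAt_thetaMulNeg (hq : ‖q‖ < 1) {x : ℂ} (hx : x ≠ 0) :
    DifferentiableAt ℂ (thetaMulNeg q) x :=
  (differentiableAt_theta hq hx).mul
    ((differentiableAt_theta hq (neg_ne_zero.2 hx)).comp x differentiableAt_id.neg)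

theorem differentiableAt_thetaAdditionDefect (hq : ‖q‖ < 1) (hy : y ≠ 0) {x : ℂ} (hx : x ≠ 0) :
    DifferentiableAt ℂ (thetaAdditionDefect q y) x := by
  have h := differentiableAt_theta hq hx
  have hneg := (differentiableAt_theta hq (neg_ne_zero.2 hx)).comp x differentiableAt_id.neg
  have hmul := (differentiableAt_theta hq (mul_ne_zero hx hy)).comp x
    (differentiableAt_id.mul_const y)
  have hdiv := (differentiableAt_theta hq (div_ne_zero hx hy)).comp x
    (differentiableAt_id.div_const y)
  unfold thetaAdditionDefect
  fun_prop

theorem thetaMulNeg_mul_left (hq0 : q ≠ 0) (hq1 : ‖q‖ < 1) {x : ℂ} (hx : x ≠ 0) :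
    thetaMulNeg q (q * x) = -(x ^ 2)⁻¹ * thetaMulNeg q x := by
  rw [thetaMulNeg, thetaMulNeg, ← mul_neg, theta_mul_left hq0 hq1 hx,
    theta_mul_left hq0 hq1 (neg_ne_zero.2 hx)]
  ring

theorem thetaAdditionDefect_mul_left (hq0 : q ≠ 0) (hq1 : ‖q‖ < 1) (hy : y ≠ 0) {x : ℂ}
    (hx : x ≠ 0) : thetaAdditionDefect q y (q * x) = (x ^ 2)⁻¹ * thetaAdditionDefect q y x := by
  rw [thetaAdditionDefect, thetaAdditionDefect, ← mul_neg, show q * x * y = q * (x * y) by ring,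
    mul_div_assoc, theta_mul_left hq0 hq1 hx, theta_mul_left hq0 hq1 (neg_ne_zero.2 hx),
    theta_mul_left hq0 hq1 (mul_ne_zero hx hy), theta_mul_left hq0 hq1 (div_ne_zero hx hy)]
  field_simp

theorem thetaAdditionDefect_one (hq : ‖q‖ < 1) (hy : y ≠ 0) : thetaAdditionDefect q y 1 = 0 := by
  rw [thetaAdditionDefect, theta_one hq, one_mul, one_div, theta_inv hq hy]
  field_simp
  ring

theorem thetaAdditionDefect_neg_one (hq : ‖q‖ < 1) (hy : y ≠ 0) :
    thetaAdditionDefect q y (-1) = 0 := by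
  rw [thetaAdditionDefect, neg_neg, theta_one hq, neg_one_mul, neg_div, ← div_neg, one_div,
    theta_inv hq (neg_ne_zero.2 hy)]
  field_simp
  ring

theorem thetaMulNeg_neg (x : ℂ) : thetaMulNeg q (-x) = thetaMulNeg q x := by
  rw [thetaMulNeg, thetaMulNeg, neg_neg, mul_comm]

theorem deriv_thetaMulNeg_neg (x : ℂ) : deriv (thetaMulNeg q) (-x) = -deriv (thetaMulNeg q) x := by
  conv_rhs => rw [← funext (thetaMulNeg_neg (q := q)), deriv_comp_neg, neg_neg]

theorem deriv_thetaMulNeg_one (hq : ‖q‖ < 1) :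
    deriv (thetaMulNeg q) 1 = -qPochhammer q q ^ 2 * theta q (-1) := by
  have h := (hasDerivAt_theta_one hq).mul
    ((differentiableAt_theta hq (by norm_num : (-1 : ℂ) ≠ 0)).hasDerivAt.comp 1 (hasDerivAt_neg 1))
  rw [theta_one hq, zero_mul, add_zero] at h
  exact h.deriv

theorem eq_one_or_eq_neg_one_of_thetaMulNeg_eq_zero (hq : ‖q‖ < 1) {w : ℂ} (hw1 : ‖q‖ < ‖w‖)
    (hw2 : ‖w‖ ≤ 1) (h : thetaMulNeg q w = 0) : w = 1 ∨ w = -1 := by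
  rcases mul_eq_zero.1 h with h | h
  · exact .inl (eq_one_of_theta_eq_zero hq hw1 hw2 h)
  · exact .inr (neg_eq_iff_eq_neg.1 (eq_one_of_theta_eq_zero hq (by rwa [norm_neg])
      (by rwa [norm_neg]) h))

theorem thetaAdditionDefect_eq_zero_of_thetaMulNeg_eq_zero (hq0 : q ≠ 0) (hq1 : ‖q‖ < 1)
    (hy : y ≠ 0) {x : ℂ} (hx : x ≠ 0) (h : thetaMulNeg q x = 0) :
    thetaAdditionDefect q y x = 0 := by
  refine forall_ne_zero_of_forall_annulus hq0 hq1
    (P := fun x => thetaMulNeg q x = 0 → thetaAdditionDefect q y x = 0) (fun z hz => ?_)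
    (fun w hw1 hw2 hw => ?_) hx h
  · simp only [thetaMulNeg_mul_left hq0 hq1 hz, thetaAdditionDefect_mul_left hq0 hq1 hy hz,
      mul_eq_zero, neg_eq_zero, inv_eq_zero, pow_eq_zero_iff two_ne_zero, hz, false_or]
  · rcases eq_one_or_eq_neg_one_of_thetaMulNeg_eq_zero hq1 hw1 hw2 hw with rfl | rfl
    · exact thetaAdditionDefect_one hq1 hy
    · exact thetaAdditionDefect_neg_one hq1 hy

theorem deriv_thetaMulNeg_ne_zero (hq0 : q ≠ 0) (hq1 : ‖q‖ < 1) {x : ℂ} (hx : x ≠ 0)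
    (h : thetaMulNeg q x = 0) : deriv (thetaMulNeg q) x ≠ 0 := by
  refine forall_ne_zero_of_forall_annulus hq0 hq1
    (P := fun x => thetaMulNeg q x = 0 → deriv (thetaMulNeg q) x ≠ 0) (fun z hz => ?_)
    (fun w hw1 hw2 hw => ?_) hx h
  · have hzero : thetaMulNeg q (q * z) = 0 ↔ thetaMulNeg q z = 0 := by
      simp [thetaMulNeg_mul_left hq0 hq1 hz, hz]
    refine imp_congr_ctx hzero fun hgz => not_congr ?_
    have hderiv := mul_deriv_comp_mul_of_eq_zero (differentiableAt_thetaMulNeg hq1 hz)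
      (differentiableAt_thetaMulNeg hq1 (mul_ne_zero hq0 hz))
      (u := fun w => -(w ^ 2)⁻¹) (by fun_prop (disch := simp [hz]))
      (eventually_ne_nhds hz |>.mono fun w hw => thetaMulNeg_mul_left hq0 hq1 hw) hgz
    simpa [hq0, hz] using congrArg (· = 0) hderiv
  · have hne : deriv (thetaMulNeg q) 1 ≠ 0 := by
      rw [deriv_thetaMulNeg_one hq1]
      exact mul_ne_zero (neg_ne_zero.2 (pow_ne_zero 2 (qPochhammer_self_ne_zero hq1)))
        (theta_neg_one_ne_zero hq1)
    rcases eq_one_or_eq_neg_one_of_thetaMulNeg_eq_zero hq1 hw1 hw2 hw with rfl | rfl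
    · exact hne
    · rwa [deriv_thetaMulNeg_neg, neg_ne_zero]

theorem thetaAdditionDefect_eq_zero (hq0 : q ≠ 0) (hq1 : ‖q‖ < 1) (hy : y ≠ 0) {x : ℂ}
    (hx : x ≠ 0) : thetaAdditionDefect q y x = 0 := by
  have hK : ∀ z, z ≠ 0 → DifferentiableAt ℂ (thetaAdditionDefect q y) z :=
    fun z hz => differentiableAt_thetaAdditionDefect hq1 hy hz
  have hg : ∀ z, z ≠ 0 → DifferentiableAt ℂ (thetaMulNeg q) z :=
    fun z hz => differentiableAt_thetaMulNeg hq1 hz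
  have hzero : ∀ z, z ≠ 0 → thetaMulNeg q z = 0 → thetaAdditionDefect q y z = 0 :=
    fun z hz => thetaAdditionDefect_eq_zero_of_thetaMulNeg_eq_zero hq0 hq1 hy hz
  have hF : DifferentiableOn ℂ (lhopitalDiv (thetaAdditionDefect q y) (thetaMulNeg q)) {0}ᶜ :=
    fun z hz => (differentiableAt_lhopitalDiv ((eventually_ne_nhds hz).mono hK)
      ((eventually_ne_nhds hz).mono hg) fun h =>
        ⟨hzero z hz h, deriv_thetaMulNeg_ne_zero hq0 hq1 hz h⟩).differentiableWithinAt
  have hFq : ∀ z, z ≠ 0 → lhopitalDiv (thetaAdditionDefect q y) (thetaMulNeg q) (q * z) =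
      -lhopitalDiv (thetaAdditionDefect q y) (thetaMulNeg q) z := fun z hz => by
    have hqz : q * z ≠ 0 := mul_ne_zero hq0 hz
    rw [lhopitalDiv_comp_mul hq0 (hK z hz) (hK _ hqz) (hg z hz) (hg _ hqz)
      (v := fun w => (w ^ 2)⁻¹) (u := fun w => -(w ^ 2)⁻¹)
      (by fun_prop (disch := simp [hz])) (by fun_prop (disch := simp [hz])) (by simp [hz])
      ((eventually_ne_nhds hz).mono fun w hw => thetaAdditionDefect_mul_left hq0 hq1 hy hw)
      ((eventually_ne_nhds hz).mono fun w hw => thetaMulNeg_mul_left hq0 hq1 hw) (hzero z hz)]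
    field_simp
  rw [← mul_lhopitalDiv (hzero x hx), eq_zero_of_comp_mul_eq_neg hq0 hq1 hF hFq hx, mul_zero]

end thetaAdditionDefect

theorem theta_addition_formula_general (q x y : ℂ) (hq0 : 0 < ‖q‖)
    (hq1 : ‖q‖ < 1) (hx : x ≠ 0) (hy : y ≠ 0)
    (hθx : theta q x ≠ 0) (hθy : theta q y ≠ 0) :
    y * theta q (x * y) * theta q (x / y) / (theta q x ^ 2 * theta q y ^ 2)
      = fTheta q y - fTheta q x := by
  have hθ1 := theta_neg_one_ne_zero hq1
  have hK := thetaAdditionDefect_eq_zero (norm_pos_iff.1 hq0) hq1 hy hx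
  rw [thetaAdditionDefect] at hK
  rw [fTheta, fTheta, div_sub_div _ _ (by simp [hθ1, hθy]) (by simp [hθ1, hθx]),
    div_eq_div_iff (by simp [hθx, hθy]) (by simp [hθ1, hθx, hθy])]
  linear_combination -theta q (-1) ^ 2 * theta q x ^ 2 * theta q y ^ 2 * hK

theorem theta_addition_formula (q x y : ℂ) (hq0 : 0 < ‖q‖)
    (hq1 : ‖q‖ < 1) (hx : x ≠ 0) (hy : y ≠ 0)
    (hθx : theta q x ≠ 0) (hθy : theta q y ≠ 0) (hθ1 : theta q (-1) ≠ 0) :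
    y * theta q (x * y) * theta q (x / y) / (theta q x ^ 2 * theta q y ^ 2)
      = fTheta q y - fTheta q x :=
  theta_addition_formula_general q x y hq0 hq1 hx hy hθx hθy
end

section
/- If f : ℂ∖{0} → ℂ is any function such that y·θ(xy)θ(x/y) = θ(x)²θ(y)²·(f(y) - f(x)) for all nonzero x, y, then the three-term identity y·u·θ(xy)θ(x/y)θ(vu)θ(v/u) + u·v·θ(xu)θ(x/u)θ(yv)θ(y/v) + v·y·θ(xv)θ(x/v)θ(uy)θ(u/y) = 0 holds for all nonzero x, y, u, v. Here θ(w) := θ(w; q). -/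
/-! Write `g a b := b θ(ab) θ(a/b)`; the three terms are `g(x,y) g(v,u)`, `g(x,u) g(y,v)` and
`g(x,v) g(u,y)`. The hypothesis factors `g(a,b) = θ(a)² θ(b)² (f b - f a)`, so the sum is
`θ(x)² θ(y)² θ(u)² θ(v)²` times a combination of differences of `f` that vanishes identically. -/

theorem sub_mul_sub_add_sub_mul_sub_add_sub_mul_sub {R : Type*} [CommRing R] (a b c d : R) :
    (b - a) * (c - d) + (c - a) * (d - b) + (d - a) * (b - c) = 0 := by
  ring

theorem three_term_of_eq_mul_sub {α R : Type*} [CommRing R] {p : α → Prop} {g : α → α → R}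
    {h f : α → R} (hg : ∀ a b, p a → p b → g a b = h a * h b * (f b - f a))
    {x y u v : α} (hx : p x) (hy : p y) (hu : p u) (hv : p v) :
    g x y * g v u + g x u * g y v + g x v * g u y = 0 := by
  rw [hg x y hx hy, hg v u hv hu, hg x u hx hu, hg y v hy hv, hg x v hx hv, hg u y hu hy]
  linear_combination h x * h y * h u * h v *
    sub_mul_sub_add_sub_mul_sub_add_sub_mul_sub (f x) (f y) (f u) (f v)

theorem addition_implies_three_term_general (q : ℂ) (f : ℂ → ℂ)
    (hf : ∀ x y : ℂ, x ≠ 0 → y ≠ 0 →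
      y * theta q (x * y) * theta q (x / y) = theta q x ^ 2 * theta q y ^ 2 * (f y - f x))
    (x y u v : ℂ) (hx : x ≠ 0) (hy : y ≠ 0) (hu : u ≠ 0) (hv : v ≠ 0) :
    y * u * (theta q (x * y) * theta q (x / y) * theta q (v * u) * theta q (v / u))
      + u * v * (theta q (x * u) * theta q (x / u) * theta q (y * v) * theta q (y / v))
      + v * y * (theta q (x * v) * theta q (x / v) * theta q (u * y) * theta q (u / y)) = 0 := by
  have key := three_term_of_eq_mul_sub (g := fun a b => b * theta q (a * b) * theta q (a / b))
    (h := fun a => theta q a ^ 2) hf hx hy hu hv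
  linear_combination key

theorem addition_implies_three_term (q : ℂ) (hq0 : 0 < ‖q‖)
    (hq1 : ‖q‖ < 1) (f : ℂ → ℂ)
    (hf : ∀ x y : ℂ, x ≠ 0 → y ≠ 0 →
      y * theta q (x * y) * theta q (x / y) = theta q x ^ 2 * theta q y ^ 2 * (f y - f x))
    (x y u v : ℂ) (hx : x ≠ 0) (hy : y ≠ 0) (hu : u ≠ 0) (hv : v ≠ 0) :
    y * u * (theta q (x * y) * theta q (x / y) * theta q (v * u) * theta q (v / u))
      + u * v * (theta q (x * u) * theta q (x / u) * theta q (y * v) * theta q (y / v))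
      + v * y * (theta q (x * v) * theta q (x / v) * theta q (u * y) * theta q (u / y)) = 0 :=
  addition_implies_three_term_general q f hf x y u v hx hy hu hv
end

section
/- (Jacobi five-term theta identity, multiplicative form) For 0 < |q| < 1 and nonzero complex w, x, y, z, setting w'' = w⁻¹xyz, x'' = wx⁻¹yz, y'' = wxy⁻¹z, z'' = wxyz⁻¹: 2·θ(w²;q²)θ(x²;q²)θ(y²;q²)θ(z²;q²) = θ(w'';q²)θ(x'';q²)θ(y'';q²)θ(z'';q²) + θ(-w'';q²)θ(-x'';q²)θ(-y'';q²)θ(-z'';q²) + q⁻¹xyzw·(θ(qw'';q²)θ(qx'';q²)θ(qy'';q²)θ(qz'';q²) - θ(-qw'';q²)θ(-qx'';q²)θ(-qy'';q²)θ(-qz'';q²)). -/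
/-!
By the Jacobi triple product (`theta_sq_eq`), `θ(u; q²) = (q²; q²)_∞⁻¹ ∑ₙ (-1)ⁿ q^(n² - n) uⁿ`.
It is the limit `N → ∞` of the finite version
`∏_{j<N} (1 - q^{2j} u) (1 - q^{2j+2} u⁻¹) = ∑_{|n| ≤ N} (-1)ⁿ q^(n² - n) uⁿ [2N, N + n]_{q²}`,
a rescaling of the `q`-binomial theorem; the limit exchange is Tannery's theorem, the Gaussian
binomials being uniformly bounded and tending to `(q²; q²)_∞⁻¹`.

Both sides of the five-term identity are homogeneous of degree four in `θ`, so it suffices to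
prove it for the series, where each product of four series is a sum over `ℤ⁴`. On the right,
for the coordinate sum `s` of `v`, the four sums combine to `2 T(v)` if `s` is even and to
`2 q^(s-1) xyzw T(v)` if `s` is odd, where `T(v)` is the term of the first product. The bijection
`v ↦ ⌈s/2⌉ - v` of `ℤ⁴` matches these with twice the terms on the left. Monomial identities with
integer exponents are checked after writing each nonzero variable as an exponential.
-/

open Complex Finset Filter Topology
open scoped Real

section GaussBinom

variable {R : Type*} [CommRing R] (Q : R)

def qPoch (m : ℕ) : R := ∏ i ∈ range m, (1 - Q ^ (i + 1))

def gaussBinom : ℕ → ℕ → R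
  | _, 0 => 1
  | 0, _ + 1 => 0
  | m + 1, k + 1 => gaussBinom m k + Q ^ (k + 1) * gaussBinom m (k + 1)

@[simp] lemma gaussBinom_zero_right (m : ℕ) : gaussBinom Q m 0 = 1 := by cases m <;> rfl

lemma gaussBinom_succ_succ (m k : ℕ) :
    gaussBinom Q (m + 1) (k + 1) = gaussBinom Q m k + Q ^ (k + 1) * gaussBinom Q m (k + 1) := rfl

lemma gaussBinom_of_lt : ∀ {m k : ℕ}, m < k → gaussBinom Q m k = 0
  | 0, _ + 1, _ => rfl
  | m + 1, k + 1, h => by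
    rw [gaussBinom_succ_succ, gaussBinom_of_lt (by omega), gaussBinom_of_lt (by omega), mul_zero,
      add_zero]

@[simp] lemma gaussBinom_self : ∀ m : ℕ, gaussBinom Q m m = 1
  | 0 => rfl
  | m + 1 => by
    rw [gaussBinom_succ_succ, gaussBinom_self m, gaussBinom_of_lt Q (Nat.lt_succ_self m), mul_zero,
      add_zero]

/-- The `q`-binomial theorem. -/
theorem prod_one_add_mul_pow_eq_sum (m : ℕ) (t : R) :
    ∏ j ∈ range m, (1 + t * Q ^ j)
      = ∑ k ∈ range (m + 1), Q ^ k.choose 2 * gaussBinom Q m k * t ^ k := by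
  induction m generalizing t with
  | zero => simp
  | succ m ih =>
    set f : ℕ → R := fun k ↦ Q ^ k.choose 2 * gaussBinom Q m k * (t * Q) ^ k
    have hshift : ∑ k ∈ range (m + 1), f (k + 1) = ∑ k ∈ range (m + 1), f k - 1 := by
      have h := sum_range_succ f (m + 1)
      rw [sum_range_succ', show f (m + 1) = 0 by simp [f, gaussBinom_of_lt]] at h
      simp only [f, Nat.choose_zero_succ, pow_zero, gaussBinom_zero_right, mul_one] at h
      linear_combination h
    calc ∏ j ∈ range (m + 1), (1 + t * Q ^ j)
        = (1 + t) * ∏ j ∈ range m, (1 + t * Q * Q ^ j) := by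
          rw [prod_range_succ', mul_comm]
          simp only [pow_succ, pow_zero, mul_one, mul_assoc, mul_comm Q]
      _ = 1 + t * ∑ k ∈ range (m + 1), f k + ∑ k ∈ range (m + 1), f (k + 1) := by
          rw [ih, hshift]; ring
      _ = ∑ k ∈ range (m + 1 + 1), Q ^ k.choose 2 * gaussBinom Q (m + 1) k * t ^ k := by
          have hterm (k : ℕ) : Q ^ (k + 1).choose 2 * gaussBinom Q (m + 1) (k + 1) * t ^ (k + 1)
              = t * f k + f (k + 1) := by
            simp only [f, gaussBinom_succ_succ, Nat.choose_succ_succ, Nat.choose_one_right]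
            ring
          rw [sum_range_succ' _ (m + 1), sum_congr rfl fun k _ ↦ hterm k, sum_add_distrib, ← mul_sum]
          simp only [Nat.choose_zero_succ, pow_zero, gaussBinom_zero_right, mul_one]
          ring

lemma gaussBinom_mul_qPoch_mul_qPoch :
    ∀ {m k : ℕ}, k ≤ m → gaussBinom Q m k * qPoch Q k * qPoch Q (m - k) = qPoch Q m
  | m, 0, _ => by simp [qPoch]
  | m + 1, k + 1, h => by
    rcases (Nat.lt_or_eq_of_le (Nat.le_of_succ_le_succ h)) with hk | rfl
    · obtain ⟨d, rfl⟩ := Nat.exists_eq_add_of_lt hk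
      have h₁ := gaussBinom_mul_qPoch_mul_qPoch (m := k + d + 1) (k := k) (by omega)
      have h₂ := gaussBinom_mul_qPoch_mul_qPoch (m := k + d + 1) (k := k + 1) (by omega)
      rw [show k + d + 1 - k = d + 1 by omega] at h₁
      rw [show k + d + 1 - (k + 1) = d by omega] at h₂
      rw [show k + d + 1 + 1 - (k + 1) = d + 1 by omega, gaussBinom_succ_succ]
      simp only [qPoch, prod_range_succ] at h₁ h₂ ⊢
      linear_combination (1 - Q ^ (k + 1)) * h₁ + Q ^ (k + 1) * (1 - Q ^ (d + 1)) * h₂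
    · simp [qPoch]

end GaussBinom

lemma prod_one_add_mul_pow_two_mul {K : Type*} [Field K] {Q w : K} (hQ : Q ≠ 0) (hw : w ≠ 0)
    (N : ℕ) :
    ∏ j ∈ range (2 * N), (1 + -w * Q⁻¹ ^ N * Q ^ j) = (-w) ^ N * Q⁻¹ ^ (N + 1).choose 2
      * ∏ j ∈ range N, (1 - Q ^ j * w) * (1 - Q ^ (j + 1) * w⁻¹) := by
  have hlow : ∏ j ∈ range N, (1 + -w * Q⁻¹ ^ N * Q ^ j)
      = ∏ j ∈ range N, (-w * Q⁻¹ ^ (j + 1)) * (1 - Q ^ (j + 1) * w⁻¹) := by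
    rw [← prod_range_reflect]
    refine prod_congr rfl fun j hj ↦ ?_
    have hQj : Q ^ (N - 1 - j) * Q ^ (j + 1) = Q ^ N := by
      rw [← pow_add]; congr 1; have := mem_range.mp hj; omega
    simp only [inv_pow]
    rw [← hQj]
    field_simp
    ring
  have hhigh : ∏ j ∈ range N, (1 + -w * Q⁻¹ ^ N * Q ^ (N + j)) = ∏ j ∈ range N, (1 - Q ^ j * w) :=
    prod_congr rfl fun j _ ↦ by rw [pow_add, inv_pow]; field_simp; ring
  have hc : ∏ j ∈ range N, (-w * Q⁻¹ ^ (j + 1)) = (-w) ^ N * Q⁻¹ ^ (N + 1).choose 2 := by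
    rw [prod_mul_distrib, prod_const, card_range, prod_pow_eq_pow_sum, Nat.choose_two_right,
      ← sum_range_id, sum_range_succ' _ N, add_zero]
  rw [two_mul, prod_range_add, hlow, hhigh, prod_mul_distrib, hc, prod_mul_distrib]
  ring

section FourfoldProducts

variable {ι R : Type*} [NormedRing R] {f₁ f₂ f₃ f₄ : ι → R}

lemma summable_norm_mul_mul (h₁ : Summable fun i ↦ ‖f₁ i‖) (h₂ : Summable fun i ↦ ‖f₂ i‖)
    (h₃ : Summable fun i ↦ ‖f₃ i‖) :
    Summable fun v : ι × ι × ι ↦ ‖f₁ v.1 * (f₂ v.2.1 * f₃ v.2.2)‖ :=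
  h₁.mul_norm (g := fun p : ι × ι ↦ f₂ p.1 * f₃ p.2) (h₂.mul_norm h₃)

lemma summable_norm_mul_mul_mul (h₁ : Summable fun i ↦ ‖f₁ i‖)
    (h₂ : Summable fun i ↦ ‖f₂ i‖) (h₃ : Summable fun i ↦ ‖f₃ i‖)
    (h₄ : Summable fun i ↦ ‖f₄ i‖) :
    Summable fun v : ι × ι × ι × ι ↦ ‖f₁ v.1 * (f₂ v.2.1 * (f₃ v.2.2.1 * f₄ v.2.2.2))‖ :=
  h₁.mul_norm (g := fun p : ι × ι × ι ↦ f₂ p.1 * (f₃ p.2.1 * f₄ p.2.2))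
    (summable_norm_mul_mul h₂ h₃ h₄)

lemma tsum_mul_tsum_mul_tsum_mul_tsum [CompleteSpace R] (h₁ : Summable fun i ↦ ‖f₁ i‖)
    (h₂ : Summable fun i ↦ ‖f₂ i‖) (h₃ : Summable fun i ↦ ‖f₃ i‖)
    (h₄ : Summable fun i ↦ ‖f₄ i‖) :
    (∑' i, f₁ i) * (∑' i, f₂ i) * (∑' i, f₃ i) * (∑' i, f₄ i)
      = ∑' v : ι × ι × ι × ι, f₁ v.1 * (f₂ v.2.1 * (f₃ v.2.2.1 * f₄ v.2.2.2)) := by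
  rw [mul_assoc, mul_assoc, tsum_mul_tsum_of_summable_norm h₃ h₄,
    tsum_mul_tsum_of_summable_norm h₂ (h₃.mul_norm h₄),
    tsum_mul_tsum_of_summable_norm h₁ (summable_norm_mul_mul h₂ h₃ h₄)]

end FourfoldProducts

section QPochLimit

variable {Q : ℂ}

lemma multipliable_one_sub_pow_mul_s9 (hQ : ‖Q‖ < 1) (a : ℂ) :
    Multipliable fun j : ℕ ↦ 1 - Q ^ j * a := by
  simpa [sub_eq_add_neg] using Complex.multipliable_one_add_of_summable
    ((summable_geometric_of_norm_lt_one hQ).mul_right a).neg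

lemma one_sub_pow_succ_ne_zero_s9 (hQ : ‖Q‖ < 1) (i : ℕ) : 1 - Q ^ (i + 1) ≠ 0 := by
  refine sub_ne_zero.mpr fun h ↦ ?_
  have := pow_lt_one₀ (norm_nonneg Q) hQ i.succ_ne_zero
  rw [← norm_pow, ← h, norm_one] at this
  exact this.false

lemma qPoch_ne_zero (hQ : ‖Q‖ < 1) (m : ℕ) : qPoch Q m ≠ 0 :=
  prod_ne_zero_iff.mpr fun i _ ↦ one_sub_pow_succ_ne_zero_s9 hQ i

lemma tprod_one_sub_pow_succ_ne_zero_s9 (hQ : ‖Q‖ < 1) : ∏' i : ℕ, (1 - Q ^ (i + 1)) ≠ 0 := by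
  simpa [sub_eq_add_neg] using tprod_one_add_ne_zero_of_summable (f := fun i ↦ -Q ^ (i + 1))
    (by simpa [sub_eq_add_neg] using one_sub_pow_succ_ne_zero_s9 hQ)
    (by simpa [pow_succ] using (summable_geometric_of_lt_one (norm_nonneg Q) hQ).mul_right ‖Q‖)

lemma tendsto_qPoch (hQ : ‖Q‖ < 1) :
    Tendsto (qPoch Q) atTop (𝓝 (∏' i : ℕ, (1 - Q ^ (i + 1)))) := by
  have := multipliable_one_sub_pow_mul_s9 hQ Q
  simp only [← pow_succ] at this
  exact this.hasProd.tendsto_prod_nat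

lemma gaussBinom_eq_div (hQ : ‖Q‖ < 1) {m k : ℕ} (hkm : k ≤ m) :
    gaussBinom Q m k = qPoch Q m / (qPoch Q k * qPoch Q (m - k)) := by
  rw [eq_div_iff (mul_ne_zero (qPoch_ne_zero hQ k) (qPoch_ne_zero hQ (m - k))), ← mul_assoc,
    gaussBinom_mul_qPoch_mul_qPoch Q hkm]

lemma exists_norm_gaussBinom_le (hQ : ‖Q‖ < 1) :
    ∃ C, ∀ m k : ℕ, k ≤ m → ‖gaussBinom Q m k‖ ≤ C := by
  have hlim := tendsto_qPoch hQ
  obtain ⟨A, hA⟩ := isBounded_iff_forall_norm_le.mp (Metric.isBounded_range_of_tendsto _ hlim)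
  obtain ⟨B, hB⟩ := isBounded_iff_forall_norm_le.mp
    (Metric.isBounded_range_of_tendsto _ (hlim.inv₀ (tprod_one_sub_pow_succ_ne_zero_s9 hQ)))
  refine ⟨A * (B * B), fun m k hkm ↦ ?_⟩
  rw [gaussBinom_eq_div hQ hkm, div_eq_mul_inv, mul_inv, norm_mul, norm_mul]
  have hB₀ : 0 ≤ B := (norm_nonneg _).trans (hB _ ⟨0, rfl⟩)
  exact mul_le_mul (hA _ ⟨m, rfl⟩) (mul_le_mul (hB _ ⟨k, rfl⟩) (hB _ ⟨m - k, rfl⟩)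
    (norm_nonneg _) hB₀) (by positivity) ((norm_nonneg _).trans (hA _ ⟨0, rfl⟩))

lemma tendsto_gaussBinom_two_mul (hQ : ‖Q‖ < 1) (n : ℤ) :
    Tendsto (fun N : ℕ ↦ gaussBinom Q (2 * N) (n + N).toNat) atTop
      (𝓝 (∏' i : ℕ, (1 - Q ^ (i + 1)))⁻¹) := by
  set L := ∏' i : ℕ, (1 - Q ^ (i + 1))
  have hL : L ≠ 0 := tprod_one_sub_pow_succ_ne_zero_s9 hQ
  have hlim := tendsto_qPoch hQ
  have hratio : Tendsto (fun N : ℕ ↦ qPoch Q (2 * N) / (qPoch Q (n + N).toNat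
      * qPoch Q ((N : ℤ) - n).toNat)) atTop (𝓝 (L / (L * L))) :=
    (hlim.comp (tendsto_atTop_atTop.mpr fun b ↦ ⟨b, fun N hN ↦ by omega⟩)).div
      ((hlim.comp (tendsto_atTop_atTop.mpr fun b ↦ ⟨b + n.natAbs, fun N hN ↦ by omega⟩)).mul
        (hlim.comp (tendsto_atTop_atTop.mpr fun b ↦ ⟨b + n.natAbs, fun N hN ↦ by omega⟩)))
      (mul_ne_zero hL hL)
  rw [div_mul_cancel_left₀ hL] at hratio
  refine hratio.congr' ?_
  filter_upwards [eventually_ge_atTop n.natAbs] with N hN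
  rw [gaussBinom_eq_div hQ (by omega), show 2 * N - (n + N).toNat = ((N : ℤ) - n).toNat by omega]

end QPochLimit

noncomputable def thetaTerm (q u : ℂ) (n : ℤ) : ℂ := (-1) ^ n * q ^ (n ^ 2 - n) * u ^ n

noncomputable def thetaSeries (q u : ℂ) : ℂ := ∑' n : ℤ, thetaTerm q u n

lemma thetaTerm_exp (ℓ U : ℂ) (n : ℤ) :
    thetaTerm (exp ℓ) (exp U) n = exp (n * (π * I) + (n ^ 2 - n) * ℓ + n * U) := by
  rw [thetaTerm, ← exp_pi_mul_I, ← exp_int_mul, ← exp_int_mul, ← exp_int_mul, ← exp_add,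
    ← exp_add]
  push_cast
  ring

lemma thetaTerm_eq_jacobiTheta₂_term (ℓ U : ℂ) (n : ℤ) :
    thetaTerm (exp ℓ) (exp U) n
      = jacobiTheta₂_term n ((π * I - ℓ + U) / (2 * π * I)) (ℓ / (π * I)) := by
  have : (π : ℂ) * I ≠ 0 := mul_ne_zero (ofReal_ne_zero.mpr Real.pi_ne_zero) I_ne_zero
  rw [thetaTerm_exp, jacobiTheta₂_term]
  congr 1
  field_simp
  ring

lemma summable_norm_thetaTerm {q : ℂ} (hq : q ≠ 0) (hq1 : ‖q‖ < 1) (u : ℂ) :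
    Summable fun n ↦ ‖thetaTerm q u n‖ := by
  rcases eq_or_ne u 0 with rfl | hu
  · refine summable_of_ne_finset_zero (s := {0}) fun n hn ↦ ?_
    rw [thetaTerm, zero_zpow n (by simpa using hn), mul_zero, norm_zero]
  rw [← exp_log hq, ← exp_log hu]
  simp_rw [thetaTerm_eq_jacobiTheta₂_term]
  refine summable_norm_iff.mpr ((summable_jacobiTheta₂_term_iff _ _).mpr ?_)
  have hlog : Real.log ‖q‖ < 0 := Real.log_neg (norm_pos_iff.mpr hq) hq1
  simpa [div_im, log_re] using
    div_neg_of_neg_of_pos (mul_neg_of_neg_of_pos hlog Real.pi_pos) (by positivity : 0 < π * π)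

lemma thetaTerm_natCast_sub {q w : ℂ} (hq : q ≠ 0) (hw : w ≠ 0) (N k : ℕ) :
    thetaTerm q w (k - N) = ((-w) ^ N * ((q ^ 2)⁻¹) ^ (N + 1).choose 2)⁻¹
      * ((q ^ 2) ^ k.choose 2 * (-w * ((q ^ 2)⁻¹) ^ N) ^ k) := by
  obtain ⟨ℓ, rfl⟩ : ∃ ℓ, exp ℓ = q := ⟨log q, exp_log hq⟩
  obtain ⟨W, rfl⟩ : ∃ W, exp W = w := ⟨log w, exp_log hw⟩
  rw [show -exp W = exp (W + π * I) by rw [exp_add, exp_pi_mul_I]; ring, thetaTerm_exp]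
  simp only [← exp_neg, ← exp_nat_mul, ← exp_add]
  congr 1
  push_cast [Nat.cast_choose_two]
  ring

theorem prod_theta_factor_eq_sum {q w : ℂ} (hq : q ≠ 0) (hw : w ≠ 0) (N : ℕ) :
    ∏ j ∈ range N, (1 - (q ^ 2) ^ j * w) * (1 - (q ^ 2) ^ (j + 1) * w⁻¹)
      = ∑ k ∈ range (2 * N + 1), thetaTerm q w (k - N) * gaussBinom (q ^ 2) (2 * N) k := by
  have hQ : q ^ 2 ≠ 0 := pow_ne_zero 2 hq
  have hc : (-w) ^ N * ((q ^ 2)⁻¹) ^ (N + 1).choose 2 ≠ 0 := by simp [hq, hw]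
  rw [← inv_mul_cancel_left₀ hc (∏ j ∈ range N, _), ← prod_one_add_mul_pow_two_mul hQ hw,
    prod_one_add_mul_pow_eq_sum, mul_sum]
  refine sum_congr rfl fun k _ ↦ ?_
  rw [thetaTerm_natCast_sub hq hw]
  ring

lemma multipliable_theta_factor {Q : ℂ} (hQ : ‖Q‖ < 1) (w : ℂ) :
    Multipliable fun j : ℕ ↦ (1 - Q ^ j * w) * (1 - Q ^ (j + 1) * w⁻¹) := by
  simpa only [pow_succ, mul_assoc] using
    (multipliable_one_sub_pow_mul_s9 hQ w).mul (multipliable_one_sub_pow_mul_s9 hQ (Q * w⁻¹))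

lemma prod_theta_factor_eq_tsum {q w : ℂ} (hq : q ≠ 0) (hw : w ≠ 0) (N : ℕ) :
    ∏ j ∈ range N, (1 - (q ^ 2) ^ j * w) * (1 - (q ^ 2) ^ (j + 1) * w⁻¹)
      = ∑' n : ℤ, (Set.Icc (-(N : ℤ)) N).indicator
          (fun n ↦ thetaTerm q w n * gaussBinom (q ^ 2) (2 * N) (n + N).toNat) n := by
  rw [prod_theta_factor_eq_sum hq hw, ← coe_Icc, ← sum_eq_tsum_indicator]
  refine sum_nbij' (fun k ↦ (k : ℤ) - N) (fun n ↦ (n + N).toNat) ?_ ?_ ?_ ?_ ?_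
  all_goals intro k hk
  all_goals simp only [mem_range, mem_Icc] at hk ⊢
  all_goals try omega
  rw [show ((k : ℤ) - N + N).toNat = k by omega]

/-- The Jacobi triple product identity. -/
theorem theta_sq_eq {q w : ℂ} (hq : q ≠ 0) (hq1 : ‖q‖ < 1) (hw : w ≠ 0) :
    theta (q ^ 2) w = (∏' i : ℕ, (1 - (q ^ 2) ^ (i + 1)))⁻¹ * thetaSeries q w := by
  have hQ : ‖q ^ 2‖ < 1 := by rw [norm_pow]; exact pow_lt_one₀ (norm_nonneg q) hq1 two_ne_zero
  obtain ⟨C, hC⟩ := exists_norm_gaussBinom_le hQ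
  have hC₀ : 0 ≤ C := (norm_nonneg _).trans (hC 0 0 le_rfl)
  have hlim := tendsto_tsum_of_dominated_convergence (𝓕 := atTop)
    (f := fun (N : ℕ) n ↦ (Set.Icc (-(N : ℤ)) N).indicator
      (fun n ↦ thetaTerm q w n * gaussBinom (q ^ 2) (2 * N) (n + N).toNat) n)
    ((summable_norm_thetaTerm hq hq1 w).mul_right C)
    (fun n ↦ ((tendsto_gaussBinom_two_mul hQ n).const_mul (thetaTerm q w n)).congr' <| by
      filter_upwards [eventually_ge_atTop n.natAbs] with N hN
      rw [Set.indicator_of_mem (Set.mem_Icc.mpr ⟨by omega, by omega⟩)])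
    (Eventually.of_forall fun N n ↦ by
      rw [Set.indicator_apply]
      split_ifs with h
      · rw [norm_mul]
        exact mul_le_mul_of_nonneg_left (hC _ _ (by rw [Set.mem_Icc] at h; omega)) (norm_nonneg _)
      · rw [norm_zero]
        exact mul_nonneg (norm_nonneg _) hC₀)
  rw [tsum_mul_right, ← funext (prod_theta_factor_eq_tsum hq hw)] at hlim
  rw [theta, mul_comm]
  exact tendsto_nhds_unique (multipliable_theta_factor hQ w).hasProd.tendsto_prod_nat hlim

lemma thetaTerm_neg (q u : ℂ) (n : ℤ) : thetaTerm q (-u) n = (-1) ^ n * thetaTerm q u n := by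
  rw [thetaTerm, thetaTerm, neg_eq_neg_one_mul u, mul_zpow]
  ring

lemma thetaTerm_mul_left (q u : ℂ) (n : ℤ) : thetaTerm q (q * u) n = q ^ n * thetaTerm q u n := by
  rw [thetaTerm, thetaTerm, mul_zpow]
  ring

noncomputable def quadTerm (q u₁ u₂ u₃ u₄ : ℂ) (v : ℤ × ℤ × ℤ × ℤ) : ℂ :=
  thetaTerm q u₁ v.1 * (thetaTerm q u₂ v.2.1 * (thetaTerm q u₃ v.2.2.1 * thetaTerm q u₄ v.2.2.2))

def fiveTermEquiv : (ℤ × ℤ × ℤ × ℤ) ≃ (ℤ × ℤ × ℤ × ℤ) where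
  toFun v :=
    let m := (v.1 + v.2.1 + v.2.2.1 + v.2.2.2 + 1) / 2
    (m - v.1, m - v.2.1, m - v.2.2.1, m - v.2.2.2)
  invFun u :=
    let m := (u.1 + u.2.1 + u.2.2.1 + u.2.2.2) / 2
    (m - u.1, m - u.2.1, m - u.2.2.1, m - u.2.2.2)
  left_inv := by
    rintro ⟨a, b, c, d⟩
    simp only [Prod.mk.injEq]
    omega
  right_inv := by
    rintro ⟨a, b, c, d⟩
    simp only [Prod.mk.injEq]
    omega

section QuadTerm

variable {q : ℂ}

lemma summable_quadTerm (hq : q ≠ 0) (hq1 : ‖q‖ < 1) (u₁ u₂ u₃ u₄ : ℂ) :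
    Summable (quadTerm q u₁ u₂ u₃ u₄) :=
  (summable_norm_mul_mul_mul (summable_norm_thetaTerm hq hq1 u₁) (summable_norm_thetaTerm hq hq1 u₂)
    (summable_norm_thetaTerm hq hq1 u₃) (summable_norm_thetaTerm hq hq1 u₄)).of_norm

lemma thetaSeries_mul_mul_mul (hq : q ≠ 0) (hq1 : ‖q‖ < 1) (u₁ u₂ u₃ u₄ : ℂ) :
    thetaSeries q u₁ * thetaSeries q u₂ * thetaSeries q u₃ * thetaSeries q u₄
      = ∑' v, quadTerm q u₁ u₂ u₃ u₄ v :=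
  tsum_mul_tsum_mul_tsum_mul_tsum (summable_norm_thetaTerm hq hq1 u₁)
    (summable_norm_thetaTerm hq hq1 u₂) (summable_norm_thetaTerm hq hq1 u₃)
    (summable_norm_thetaTerm hq hq1 u₄)

lemma quadTerm_neg (u₁ u₂ u₃ u₄ : ℂ) (a b c d : ℤ) :
    quadTerm q (-u₁) (-u₂) (-u₃) (-u₄) (a, b, c, d)
      = (-1) ^ (a + b + c + d) * quadTerm q u₁ u₂ u₃ u₄ (a, b, c, d) := by
  simp only [quadTerm, thetaTerm_neg, zpow_add₀ (by norm_num : (-1 : ℂ) ≠ 0)]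
  ring

lemma quadTerm_mul_left (hq : q ≠ 0) (u₁ u₂ u₃ u₄ : ℂ) (a b c d : ℤ) :
    quadTerm q (q * u₁) (q * u₂) (q * u₃) (q * u₄) (a, b, c, d)
      = q ^ (a + b + c + d) * quadTerm q u₁ u₂ u₃ u₄ (a, b, c, d) := by
  simp only [quadTerm, thetaTerm_mul_left, zpow_add₀ hq]
  ring

variable {w x y z : ℂ} (hq : q ≠ 0) (hw : w ≠ 0) (hx : x ≠ 0) (hy : y ≠ 0) (hz : z ≠ 0)
include hq hw hx hy hz

lemma quadTerm_of_sum_eq_two_mul {a b c d k : ℤ} (h : a + b + c + d = 2 * k) :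
    quadTerm q (x * y * z / w) (w * y * z / x) (w * x * z / y) (w * x * y / z) (a, b, c, d)
      = quadTerm q (w ^ 2) (x ^ 2) (y ^ 2) (z ^ 2) (k - a, k - b, k - c, k - d) := by
  obtain ⟨ℓ, rfl⟩ : ∃ ℓ, exp ℓ = q := ⟨log q, exp_log hq⟩
  obtain ⟨W, rfl⟩ : ∃ W, exp W = w := ⟨log w, exp_log hw⟩
  obtain ⟨X, rfl⟩ : ∃ X, exp X = x := ⟨log x, exp_log hx⟩
  obtain ⟨Y, rfl⟩ : ∃ Y, exp Y = y := ⟨log y, exp_log hy⟩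
  obtain ⟨Z, rfl⟩ : ∃ Z, exp Z = z := ⟨log z, exp_log hz⟩
  simp only [quadTerm, ← exp_add, ← exp_sub, ← exp_nat_mul, thetaTerm_exp]
  obtain rfl : d = 2 * k - a - b - c := by omega
  congr 1
  push_cast
  ring

lemma quadTerm_of_sum_eq_two_mul_add_one {a b c d k : ℤ} (h : a + b + c + d = 2 * k + 1) :
    q⁻¹ * x * y * z * w * q ^ (a + b + c + d)
        * quadTerm q (x * y * z / w) (w * y * z / x) (w * x * z / y) (w * x * y / z) (a, b, c, d)
      = quadTerm q (w ^ 2) (x ^ 2) (y ^ 2) (z ^ 2) (k + 1 - a, k + 1 - b, k + 1 - c, k + 1 - d) := by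
  obtain ⟨ℓ, rfl⟩ : ∃ ℓ, exp ℓ = q := ⟨log q, exp_log hq⟩
  obtain ⟨W, rfl⟩ : ∃ W, exp W = w := ⟨log w, exp_log hw⟩
  obtain ⟨X, rfl⟩ : ∃ X, exp X = x := ⟨log x, exp_log hx⟩
  obtain ⟨Y, rfl⟩ : ∃ Y, exp Y = y := ⟨log y, exp_log hy⟩
  obtain ⟨Z, rfl⟩ : ∃ Z, exp Z = z := ⟨log z, exp_log hz⟩
  simp only [quadTerm, ← exp_add, ← exp_sub, ← exp_neg, ← exp_nat_mul, ← exp_int_mul,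
    thetaTerm_exp]
  obtain rfl : d = 2 * k + 1 - a - b - c := by omega
  refine (exp_periodic _).symm.trans (congrArg exp ?_)
  push_cast
  ring

lemma quadTerm_five_term (v : ℤ × ℤ × ℤ × ℤ) :
    quadTerm q (x * y * z / w) (w * y * z / x) (w * x * z / y) (w * x * y / z) v
        + quadTerm q (-(x * y * z / w)) (-(w * y * z / x)) (-(w * x * z / y)) (-(w * x * y / z)) v
        + q⁻¹ * x * y * z * w *
          (quadTerm q (q * (x * y * z / w)) (q * (w * y * z / x)) (q * (w * x * z / y))
              (q * (w * x * y / z)) v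
            - quadTerm q (-(q * (x * y * z / w))) (-(q * (w * y * z / x)))
              (-(q * (w * x * z / y))) (-(q * (w * x * y / z))) v)
      = 2 * quadTerm q (w ^ 2) (x ^ 2) (y ^ 2) (z ^ 2) (fiveTermEquiv v) := by
  obtain ⟨a, b, c, d⟩ := v
  rw [quadTerm_neg, quadTerm_neg, quadTerm_mul_left hq]
  obtain ⟨k, hk | hk⟩ := Int.even_or_odd' (a + b + c + d)
  · have hφ : fiveTermEquiv (a, b, c, d) = (k - a, k - b, k - c, k - d) := by
      simp only [fiveTermEquiv, Equiv.coe_fn_mk, Prod.mk.injEq]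
      omega
    rw [hφ, Even.neg_one_zpow ⟨k, by omega⟩]
    linear_combination 2 * quadTerm_of_sum_eq_two_mul hq hw hx hy hz hk
  · have hφ : fiveTermEquiv (a, b, c, d) = (k + 1 - a, k + 1 - b, k + 1 - c, k + 1 - d) := by
      simp only [fiveTermEquiv, Equiv.coe_fn_mk, Prod.mk.injEq]
      omega
    rw [hφ, Odd.neg_one_zpow ⟨k, hk⟩]
    linear_combination 2 * quadTerm_of_sum_eq_two_mul_add_one hq hw hx hy hz hk

end QuadTerm

theorem thetaSeries_five_term {q w x y z : ℂ} (hq : q ≠ 0) (hq1 : ‖q‖ < 1) (hw : w ≠ 0)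
    (hx : x ≠ 0) (hy : y ≠ 0) (hz : z ≠ 0) :
    2 * (thetaSeries q (w ^ 2) * thetaSeries q (x ^ 2) * thetaSeries q (y ^ 2)
        * thetaSeries q (z ^ 2))
      = thetaSeries q (x * y * z / w) * thetaSeries q (w * y * z / x)
          * thetaSeries q (w * x * z / y) * thetaSeries q (w * x * y / z)
        + thetaSeries q (-(x * y * z / w)) * thetaSeries q (-(w * y * z / x))
          * thetaSeries q (-(w * x * z / y)) * thetaSeries q (-(w * x * y / z))
        + q⁻¹ * x * y * z * w *
          (thetaSeries q (q * (x * y * z / w)) * thetaSeries q (q * (w * y * z / x))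
              * thetaSeries q (q * (w * x * z / y)) * thetaSeries q (q * (w * x * y / z))
            - thetaSeries q (-(q * (x * y * z / w))) * thetaSeries q (-(q * (w * y * z / x)))
              * thetaSeries q (-(q * (w * x * z / y))) * thetaSeries q (-(q * (w * x * y / z)))) := by
  have hs := summable_quadTerm hq hq1
  simp only [thetaSeries_mul_mul_mul hq hq1]
  rw [← (hs _ _ _ _).tsum_add (hs _ _ _ _), ← (hs _ _ _ _).tsum_sub (hs _ _ _ _),
    ← tsum_mul_left, ← tsum_mul_left, ← ((hs _ _ _ _).add (hs _ _ _ _)).tsum_add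
      (((hs _ _ _ _).sub (hs _ _ _ _)).mul_left _), ← fiveTermEquiv.tsum_eq]
  exact tsum_congr fun v ↦ (quadTerm_five_term hq hw hx hy hz v).symm

theorem jacobi_five_term (q w x y z : ℂ) (hq0 : 0 < ‖q‖)
    (hq1 : ‖q‖ < 1) (hw : w ≠ 0) (hx : x ≠ 0) (hy : y ≠ 0) (hz : z ≠ 0) :
    2 * (theta (q ^ 2) (w ^ 2) * theta (q ^ 2) (x ^ 2) * theta (q ^ 2) (y ^ 2)
        * theta (q ^ 2) (z ^ 2))
      = theta (q ^ 2) (x * y * z / w) * theta (q ^ 2) (w * y * z / x)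
          * theta (q ^ 2) (w * x * z / y) * theta (q ^ 2) (w * x * y / z)
        + theta (q ^ 2) (-(x * y * z / w)) * theta (q ^ 2) (-(w * y * z / x))
          * theta (q ^ 2) (-(w * x * z / y)) * theta (q ^ 2) (-(w * x * y / z))
        + q⁻¹ * x * y * z * w *
          (theta (q ^ 2) (q * (x * y * z / w)) * theta (q ^ 2) (q * (w * y * z / x))
              * theta (q ^ 2) (q * (w * x * z / y)) * theta (q ^ 2) (q * (w * x * y / z))
            - theta (q ^ 2) (-(q * (x * y * z / w))) * theta (q ^ 2) (-(q * (w * y * z / x)))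
              * theta (q ^ 2) (-(q * (w * x * z / y))) * theta (q ^ 2) (-(q * (w * x * y / z)))) := by
  have hq : q ≠ 0 := norm_pos_iff.mp hq0
  simp (disch := simp [*]) only [theta_sq_eq hq hq1]
  linear_combination (∏' i : ℕ, (1 - (q ^ 2) ^ (i + 1)))⁻¹ ^ 4
    * thetaSeries_five_term hq hq1 hw hx hy hz
end
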